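/- Let A be a proper (finite or infinite) subset of 𝕏 and let f ∈ Dom_+(Γ) be such that (i) there exists x₀ ∉ A with f(x₀) < inf_{x∈A} f(x), and (ii) there exists ε > 0 with Γf(x) ≤ −ε for all x ∉ A. Then for every x ∉ A with f(x) < inf_{y∈A} f(y) one has P_x(τ_A = ∞) > 0 and E_x(ζ | τ_A = ∞) < ∞. -/

import Mathlib

open MeasureTheory Set Filter
open scoped Classical ENNReal NNReal

/-- A continuous-time Markov chain on a countably infinite state space `X`,
described by its generator `Γ`, together with a probability space carrying,
for each starting point `x`, the embedded jump chain `jump` and the holding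
times `hold` (with `hold n` the holding time at the `n`-th visited state). -/
structure CTMC where
  X : Type
  countX : Countable X
  infX : Infinite X
  Γ : X → X → ℝ
  γ : X → ℝ
  γ_pos : ∀ x, 0 < γ x
  Γ_offdiag_nonneg : ∀ x y, y ≠ x → 0 ≤ Γ x y
  Γ_diag : ∀ x, Γ x x = - γ x
  γ_sum : ∀ x, HasSum (fun y => if y = x then 0 else Γ x y) (γ x)
  /-- irreducibility of the embedded jump chain -/
  irr : ∀ x y : X, ∃ (n : ℕ) (path : ℕ → X), path 0 = x ∧ path n = y ∧
    ∀ k, k < n → 0 < (if path (k+1) = path k then 0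
      else Γ (path k) (path (k+1)) / γ (path k))
  Ω : Type
  measΩ : MeasurableSpace Ω
  μ : X → @Measure Ω measΩ
  probμ : ∀ x, @IsProbabilityMeasure Ω measΩ (μ x)
  jump : ℕ → Ω → X
  hold : ℕ → Ω → ℝ
  jump_meas : ∀ (n : ℕ) (x : X), MeasurableSet[measΩ] {ω | jump n ω = x}
  hold_meas : ∀ n : ℕ, @Measurable Ω ℝ measΩ _ (hold n)
  hold_pos : ∀ n ω, 0 < hold n ω
  /-- under `μ x` the chain starts at `x` -/
  start : ∀ x : X, μ x {ω | jump 0 ω = x} = 1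
  /-- finite-dimensional law: the embedded chain is Markov with transition
  probabilities `P x y = Γ x y / γ x` (for `y ≠ x`), and conditionally on the
  embedded chain the holding times are independent exponentials of rates
  `γ (jump n)` -/
  law : ∀ (x : X) (n : ℕ) (path : ℕ → X) (t : ℕ → ℝ), path 0 = x → (∀ k, 0 ≤ t k) →
    μ x {ω | (∀ k, k ≤ n → jump k ω = path k) ∧ (∀ k, k < n → t k < hold k ω)}
      = ENNReal.ofReal (∏ k ∈ Finset.range n,
          ((if path (k+1) = path k then 0 else Γ (path k) (path (k+1)) / γ (path k))
            * Real.exp (-(γ (path k)) * t k)))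

namespace CTMC

attribute [instance] CTMC.countX CTMC.infX CTMC.measΩ CTMC.probμ

variable (M : CTMC)

/-- embedded chain transition probabilities -/
noncomputable def P (x y : M.X) : ℝ := if y = x then 0 else M.Γ x y / M.γ x

/-- jump times -/
noncomputable def J (n : ℕ) (ω : M.Ω) : ℝ := ∑ k ∈ Finset.range n, M.hold k ω

/-- explosion (life) time -/
noncomputable def zeta (ω : M.Ω) : ℝ≥0∞ := ⨆ n, ENNReal.ofReal (M.J n ω)

/-- the continuous-time chain: `pos t ω = some (jump n ω)` if `J n ≤ t < J (n+1)`,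
and `none` (the cemetery state `∂`) after the explosion time. -/
noncomputable def pos (t : ℝ) (ω : M.Ω) : Option M.X :=
  if h : ∃ n, M.J n ω ≤ t ∧ t < M.J (n+1) ω then some (M.jump h.choose ω) else none

/-- passage time: `τ_A = inf {t ≥ 0 : ξ_t ∈ A}` -/
noncomputable def tau (A : Set M.X) (ω : M.Ω) : ℝ≥0∞ :=
  sInf (ENNReal.ofReal '' {s : ℝ | 0 ≤ s ∧ ∃ a ∈ A, M.pos s ω = some a})

/-- `f` belongs to the domain of the generator -/
def InDom (f : M.X → ℝ) : Prop :=
  ∀ x : M.X, Summable (fun y => if y = x then 0 else M.Γ x y * f y)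

/-- `f ∈ Dom_+(Γ)` -/
def InDomPos (f : M.X → ℝ) : Prop := (∀ x, 0 ≤ f x) ∧ M.InDom f

/-- action of the generator : `Γ f (x) = ∑_y Γ_{xy} f(y)` -/
noncomputable def gen (f : M.X → ℝ) (x : M.X) : ℝ :=
  (∑' y, if y = x then 0 else M.Γ x y * f y) - M.γ x * f x

/-- recurrence of the embedded jump chain -/
def JumpRecurrent : Prop := ∀ x : M.X, M.μ x {ω | ∃ n, 1 ≤ n ∧ M.jump n ω = x} = 1

/-- `f → ∞` : all sublevel sets are finite -/
def FinSublevels (f : M.X → ℝ) : Prop := ∀ r : ℝ, {x : M.X | f x ≤ r}.Finite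

end CTMC

/-!
Write `b = inf_A f`. First-step analysis of the embedded chain killed on entering `A` gives, by
induction on `n`, for every `x ∉ A`
  `ε · E_x[J_n ; ξ̃_1, …, ξ̃_n ∉ A] + b · P_x(ξ̃_k ∈ A for some k ≤ n) ≤ f(x)`:
a step from `x` costs the mean holding time `1/γ(x)`, which the drift condition
`∑_y P_{xy} f(y) + ε/γ(x) ≤ f(x)` pays for, while `f ≥ b` on `A`. Letting `n → ∞` gives
`P_x(τ_A < ∞) ≤ f(x)/b < 1` and, by monotone convergence, `E_x[ζ ; τ_A = ∞] ≤ f(x)/ε`.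
-/

lemma lintegral_Ioi_exp_neg_mul {c : ℝ} (hc : 0 < c) :
    ∫⁻ t in Ioi (0 : ℝ), ENNReal.ofReal (Real.exp (-(c * t))) = ENNReal.ofReal c⁻¹ := by
  rw [← ofReal_integral_eq_lintegral_ofReal]
  · congr 1
    have := integral_comp_mul_left_Ioi (fun u => Real.exp (-u)) 0 hc
    simp only [mul_zero] at this
    rw [this, integral_exp_neg_Ioi_zero, smul_eq_mul, mul_one]
  · simpa only [neg_mul, IntegrableOn] using exp_neg_integrableOn_Ioi 0 hc
  · filter_upwards with t using (Real.exp_pos _).le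

lemma ENNReal.tsum_fin_cons {α : Type*} {n : ℕ} (F : (Fin (n + 1) → α) → ℝ≥0∞) :
    ∑' w, F w = ∑' (y : α) (v : Fin n → α), F (Fin.cons y v) := by
  rw [← ENNReal.tsum_prod (f := fun y v => F (Fin.cons y v))]
  exact ((Fin.consEquiv fun _ => α).tsum_eq F).symm

namespace CTMC

variable (M : CTMC)

lemma P_nonneg (x y : M.X) : 0 ≤ M.P x y := by
  unfold P
  split_ifs with h
  exacts [le_rfl, div_nonneg (M.Γ_offdiag_nonneg x y h) (M.γ_pos x).le]

lemma P_mul_eq_div (x : M.X) (g : M.X → ℝ) (y : M.X) :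
    M.P x y * g y = (if y = x then 0 else M.Γ x y * g y) / M.γ x := by
  unfold P
  split_ifs <;> ring

lemma tsum_ofReal_P (x : M.X) : ∑' y, ENNReal.ofReal (M.P x y) = 1 := by
  have hP : M.P x = fun y => (if y = x then 0 else M.Γ x y) / M.γ x :=
    funext fun y => by unfold P; split_ifs <;> simp
  have h : HasSum (M.P x) 1 := by
    simpa [hP, div_self (M.γ_pos x).ne'] using (M.γ_sum x).div_const (M.γ x)
  rw [← ENNReal.ofReal_tsum_of_nonneg (M.P_nonneg x) h.summable, h.tsum_eq, ENNReal.ofReal_one]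

lemma J_strictMono (ω : M.Ω) : StrictMono (M.J · ω) :=
  strictMono_nat_of_lt_succ fun n => by
    simpa [J, Finset.sum_range_succ] using M.hold_pos n ω

lemma J_nonneg (n : ℕ) (ω : M.Ω) : 0 ≤ M.J n ω :=
  Finset.sum_nonneg fun k _ => (M.hold_pos k ω).le

lemma eq_of_J_le_of_lt {m n : ℕ} {s : ℝ} {ω : M.Ω}
    (hm : M.J m ω ≤ s ∧ s < M.J (m + 1) ω) (hn : M.J n ω ≤ s ∧ s < M.J (n + 1) ω) :
    m = n := by
  have h₁ : m < n + 1 := (M.J_strictMono ω).lt_iff_lt.mp (hm.1.trans_lt hn.2)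
  have h₂ : n < m + 1 := (M.J_strictMono ω).lt_iff_lt.mp (hn.1.trans_lt hm.2)
  omega

lemma pos_J (n : ℕ) (ω : M.Ω) : M.pos (M.J n ω) ω = some (M.jump n ω) := by
  have hn : M.J n ω ≤ M.J n ω ∧ M.J n ω < M.J (n + 1) ω :=
    ⟨le_rfl, M.J_strictMono ω n.lt_succ_self⟩
  have hex : ∃ m, M.J m ω ≤ M.J n ω ∧ M.J n ω < M.J (m + 1) ω := ⟨n, hn⟩
  rw [pos, dif_pos hex, M.eq_of_J_le_of_lt hex.choose_spec hn]

lemma tau_eq_top_iff (A : Set M.X) (ω : M.Ω) :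
    M.tau A ω = ⊤ ↔ ∀ n, M.jump n ω ∉ A := by
  constructor
  · intro h n hn
    have hle : M.tau A ω ≤ ENNReal.ofReal (M.J n ω) :=
      sInf_le ⟨M.J n ω, ⟨M.J_nonneg n ω, M.jump n ω, hn, M.pos_J n ω⟩, rfl⟩
    exact ENNReal.ofReal_ne_top (top_le_iff.mp (h ▸ hle))
  · intro h
    have hempty : {s : ℝ | 0 ≤ s ∧ ∃ a ∈ A, M.pos s ω = some a} = ∅ := by
      refine eq_empty_of_forall_notMem fun s ⟨_, a, ha, hpos⟩ => ?_
      rw [pos] at hpos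
      split_ifs at hpos with hs
      exact h _ (Option.some_inj.mp hpos ▸ ha)
    rw [tau, hempty, image_empty, sInf_empty]

def cylinder (n : ℕ) (p : ℕ → M.X) : Set M.Ω := {ω | ∀ k ≤ n, M.jump k ω = p k}

lemma measurableSet_cylinder (n : ℕ) (p : ℕ → M.X) : MeasurableSet (M.cylinder n p) := by
  simp only [cylinder, ofPred_forall]
  exact .iInter fun k => .iInter fun _ => M.jump_meas k (p k)

lemma measurableSet_jump_mem (n : ℕ) (B : Set M.X) : MeasurableSet {ω | M.jump n ω ∈ B} := by
  have h : {ω | M.jump n ω ∈ B} = ⋃ y ∈ B, {ω | M.jump n ω = y} := by ext; simp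
  exact h ▸ .biUnion B.to_countable fun y _ => M.jump_meas n y

lemma measure_cylinder {n : ℕ} {p : ℕ → M.X} {x : M.X} (hp : p 0 = x) :
    M.μ x (M.cylinder n p) = ∏ k ∈ Finset.range n, ENNReal.ofReal (M.P (p k) (p (k + 1))) := by
  have h : M.μ x {ω | (∀ k ≤ n, M.jump k ω = p k) ∧ ∀ k < n, 0 < M.hold k ω}
      = ENNReal.ofReal (∏ k ∈ Finset.range n, M.P (p k) (p (k + 1)) * Real.exp (-M.γ (p k) * 0)) :=
    M.law x n p (fun _ => 0) hp fun _ => le_rfl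
  simp only [M.hold_pos, implies_true, and_true, mul_zero, Real.exp_zero, mul_one] at h
  rw [cylinder, h, ENNReal.ofReal_prod_of_nonneg fun k _ => M.P_nonneg _ _]

lemma measure_hold_gt_inter_cylinder {n k : ℕ} {p : ℕ → M.X} {x : M.X} (hp : p 0 = x)
    (hk : k < n) {t : ℝ} (ht : 0 ≤ t) :
    M.μ x ({ω | t < M.hold k ω} ∩ M.cylinder n p)
      = M.μ x (M.cylinder n p) * ENNReal.ofReal (Real.exp (-(M.γ (p k) * t))) := by
  have h : M.μ x {ω | (∀ j ≤ n, M.jump j ω = p j)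
        ∧ ∀ j < n, (if j = k then t else 0) < M.hold j ω}
      = ENNReal.ofReal (∏ j ∈ Finset.range n,
          M.P (p j) (p (j + 1)) * Real.exp (-M.γ (p j) * if j = k then t else 0)) :=
    M.law x n p _ hp fun j => by split_ifs <;> simp [ht]
  have hev : {ω | (∀ j ≤ n, M.jump j ω = p j)
        ∧ ∀ j < n, (if j = k then t else 0) < M.hold j ω}
      = {ω | t < M.hold k ω} ∩ M.cylinder n p := by
    ext ω
    refine ⟨fun ⟨h₁, h₂⟩ => ⟨by simpa using h₂ k hk, h₁⟩, fun ⟨h₁, h₂⟩ => ⟨h₂, fun j _ => ?_⟩⟩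
    split_ifs with hj
    exacts [hj ▸ h₁, M.hold_pos j ω]
  rw [hev] at h
  rw [h, M.measure_cylinder hp, Finset.prod_mul_distrib, ← Real.exp_sum,
    ENNReal.ofReal_mul (Finset.prod_nonneg fun j _ => M.P_nonneg _ _),
    ENNReal.ofReal_prod_of_nonneg fun j _ => M.P_nonneg _ _]
  simp [mul_ite, Finset.sum_ite_eq', hk]

lemma setLIntegral_cylinder_hold {n k : ℕ} {p : ℕ → M.X} {x : M.X} (hp : p 0 = x)
    (hk : k < n) :
    ∫⁻ ω in M.cylinder n p, ENNReal.ofReal (M.hold k ω) ∂M.μ x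
      = ENNReal.ofReal (M.γ (p k))⁻¹ * M.μ x (M.cylinder n p) := by
  rw [lintegral_eq_lintegral_meas_lt _ (.of_forall fun ω => (M.hold_pos k ω).le)
    (M.hold_meas k).aemeasurable]
  calc ∫⁻ t in Ioi 0, (M.μ x).restrict (M.cylinder n p) {ω | t < M.hold k ω}
      = ∫⁻ t in Ioi 0, M.μ x (M.cylinder n p) * ENNReal.ofReal (Real.exp (-(M.γ (p k) * t))) :=
        setLIntegral_congr_fun measurableSet_Ioi fun t ht => by
          rw [Measure.restrict_apply (measurableSet_lt measurable_const (M.hold_meas k)),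
            M.measure_hold_gt_inter_cylinder hp hk (le_of_lt ht)]
    _ = ENNReal.ofReal (M.γ (p k))⁻¹ * M.μ x (M.cylinder n p) := by
        rw [lintegral_const_mul _ (by fun_prop), lintegral_Ioi_exp_neg_mul (M.γ_pos (p k)),
          mul_comm]

def pathFrom {n : ℕ} (x : M.X) (v : Fin n → M.X) : ℕ → M.X
  | 0 => x
  | k + 1 => if h : k < n then v ⟨k, h⟩ else x

lemma pathFrom_cons {n : ℕ} (x y : M.X) (v : Fin n → M.X) {k : ℕ} (hk : k ≤ n) :
    M.pathFrom x (Fin.cons y v) (k + 1) = M.pathFrom y v k := by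
  cases k with
  | zero => simp [pathFrom]
  | succ j =>
    simp only [pathFrom, Nat.lt_of_succ_le hk, Nat.succ_lt_succ_iff, dite_true]
    exact Fin.cons_succ (α := fun _ => M.X) y v ⟨j, Nat.lt_of_succ_le hk⟩

noncomputable def pathWeight {n : ℕ} (x : M.X) (v : Fin n → M.X) : ℝ≥0∞ :=
  ∏ k ∈ Finset.range n, ENNReal.ofReal (M.P (M.pathFrom x v k) (M.pathFrom x v (k + 1)))

noncomputable def meanJumpTime {n : ℕ} (x : M.X) (v : Fin n → M.X) : ℝ≥0∞ :=
  ∑ k ∈ Finset.range n, ENNReal.ofReal (M.γ (M.pathFrom x v k))⁻¹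

lemma pathWeight_cons {n : ℕ} (x y : M.X) (v : Fin n → M.X) :
    M.pathWeight x (Fin.cons y v) = ENNReal.ofReal (M.P x y) * M.pathWeight y v := by
  rw [pathWeight, Finset.prod_range_succ', mul_comm, pathWeight]
  congr 1
  exact Finset.prod_congr rfl fun k hk => by
    rw [M.pathFrom_cons x y v (Finset.mem_range.mp hk).le,
      M.pathFrom_cons x y v (Finset.mem_range.mp hk)]

lemma meanJumpTime_cons {n : ℕ} (x y : M.X) (v : Fin n → M.X) :
    M.meanJumpTime x (Fin.cons y v) = M.meanJumpTime y v + ENNReal.ofReal (M.γ x)⁻¹ := by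
  rw [meanJumpTime, Finset.sum_range_succ', meanJumpTime]
  congr 1
  exact Finset.sum_congr rfl fun k hk => by
    rw [M.pathFrom_cons x y v (Finset.mem_range.mp hk).le]

variable (A : Set M.X)

lemma tsum_avoiding_succ {n : ℕ} (x : M.X) (G : (Fin (n + 1) → M.X) → ℝ≥0∞) :
    ∑' w : Fin (n + 1) → M.X, (if ∀ k, w k ∉ A then M.pathWeight x w * G w else 0)
      = ∑' y, ENNReal.ofReal (M.P x y) * if y ∈ A then 0 else
          ∑' v : Fin n → M.X, if ∀ k, v k ∉ A then M.pathWeight y v * G (Fin.cons y v) else 0 := by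
  rw [ENNReal.tsum_fin_cons]
  refine tsum_congr fun y => ?_
  by_cases hy : y ∈ A
  · simp [Fin.forall_fin_succ, hy]
  · simp only [Fin.forall_fin_succ, Fin.cons_zero, Fin.cons_succ, hy, not_false_eq_true,
      true_and, if_false, ← ENNReal.tsum_mul_left, M.pathWeight_cons, mul_ite, mul_zero, mul_assoc]

/- First-step recursions for `P_x(ξ̃_1, …, ξ̃_n ∉ A)`, `P_x(ξ̃_k ∈ A for some 1 ≤ k ≤ n)` and
`E_x[J_n ; ξ̃_1, …, ξ̃_n ∉ A]`. -/
noncomputable def survival : ℕ → M.X → ℝ≥0∞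
  | 0, _ => 1
  | n + 1, x => ∑' y, ENNReal.ofReal (M.P x y) * if y ∈ A then 0 else survival n y

noncomputable def hitting : ℕ → M.X → ℝ≥0∞
  | 0, _ => 0
  | n + 1, x => ∑' y, ENNReal.ofReal (M.P x y) * if y ∈ A then 1 else hitting n y

noncomputable def survivalTime : ℕ → M.X → ℝ≥0∞
  | 0, _ => 0
  | n + 1, x => ∑' y, ENNReal.ofReal (M.P x y) *
      if y ∈ A then 0 else survivalTime n y + ENNReal.ofReal (M.γ x)⁻¹ * M.survival A n y

lemma survival_add_hitting (n : ℕ) (x : M.X) : M.survival A n x + M.hitting A n x = 1 := by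
  induction n generalizing x with
  | zero => simp [survival, hitting]
  | succ n ih =>
    rw [survival, hitting, ← ENNReal.tsum_add]
    conv_rhs => rw [← M.tsum_ofReal_P x]
    refine tsum_congr fun y => ?_
    split_ifs <;> simp [← mul_add, ih]

lemma survival_le_one (n : ℕ) (x : M.X) : M.survival A n x ≤ 1 :=
  M.survival_add_hitting A n x ▸ le_self_add

lemma survival_eq_tsum (n : ℕ) (x : M.X) :
    M.survival A n x = ∑' v : Fin n → M.X, if ∀ k, v k ∉ A then M.pathWeight x v else 0 := by
  induction n generalizing x with
  | zero => simp [survival, pathWeight]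
  | succ n ih =>
    simpa [survival, ih] using (M.tsum_avoiding_succ A (n := n) x fun _ => 1).symm

lemma survivalTime_eq_tsum (n : ℕ) (x : M.X) :
    M.survivalTime A n x = ∑' v : Fin n → M.X,
      if ∀ k, v k ∉ A then M.pathWeight x v * M.meanJumpTime x v else 0 := by
  induction n generalizing x with
  | zero => simp [survivalTime, meanJumpTime]
  | succ n ih =>
    rw [M.tsum_avoiding_succ A x, survivalTime]
    refine tsum_congr fun y => ?_
    split_ifs
    · rfl
    · rw [ih, M.survival_eq_tsum, ← ENNReal.tsum_mul_left, ← ENNReal.tsum_add]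
      refine congrArg _ (tsum_congr fun v => ?_)
      split_ifs <;> simp [M.meanJumpTime_cons, mul_add, mul_comm]

theorem mul_survivalTime_add_mul_hitting_le {F : M.X → ℝ≥0∞} {ε b : ℝ≥0∞}
    (hFA : ∀ a ∈ A, b ≤ F a)
    (hdrift : ∀ x ∉ A, ∑' y, ENNReal.ofReal (M.P x y) * F y + ε * ENNReal.ofReal (M.γ x)⁻¹ ≤ F x)
    (n : ℕ) : ∀ x ∉ A, ε * M.survivalTime A n x + b * M.hitting A n x ≤ F x := by
  induction n with
  | zero => simp [survivalTime, hitting]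
  | succ n ih =>
    intro x hx
    have hstep : ∀ y, ε * (if y ∈ A then 0
          else M.survivalTime A n y + ENNReal.ofReal (M.γ x)⁻¹ * M.survival A n y)
        + b * (if y ∈ A then 1 else M.hitting A n y)
        ≤ F y + ε * ENNReal.ofReal (M.γ x)⁻¹ * (if y ∈ A then 0 else M.survival A n y) := by
      intro y
      split_ifs with hy
      · simpa using hFA y hy
      · calc ε * (M.survivalTime A n y + ENNReal.ofReal (M.γ x)⁻¹ * M.survival A n y)
              + b * M.hitting A n y
            = (ε * M.survivalTime A n y + b * M.hitting A n y)
              + ε * ENNReal.ofReal (M.γ x)⁻¹ * M.survival A n y := by ring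
          _ ≤ _ := add_le_add_left (ih y hy) _
    calc ε * M.survivalTime A (n + 1) x + b * M.hitting A (n + 1) x
        = ∑' y, ENNReal.ofReal (M.P x y) * (ε * (if y ∈ A then 0
            else M.survivalTime A n y + ENNReal.ofReal (M.γ x)⁻¹ * M.survival A n y)
            + b * (if y ∈ A then 1 else M.hitting A n y)) := by
          simp only [survivalTime, hitting, ← ENNReal.tsum_mul_left, ← ENNReal.tsum_add]
          exact tsum_congr fun y => by ring
      _ ≤ ∑' y, ENNReal.ofReal (M.P x y) * (F y + ε * ENNReal.ofReal (M.γ x)⁻¹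
            * (if y ∈ A then 0 else M.survival A n y)) :=
          ENNReal.tsum_le_tsum fun y => mul_le_mul_right (hstep y) _
      _ = ∑' y, ENNReal.ofReal (M.P x y) * F y
            + ε * ENNReal.ofReal (M.γ x)⁻¹ * M.survival A (n + 1) x := by
          simp only [survival, mul_add, ENNReal.tsum_add, ← ENNReal.tsum_mul_left, mul_left_comm]
      _ ≤ ∑' y, ENNReal.ofReal (M.P x y) * F y + ε * ENNReal.ofReal (M.γ x)⁻¹ :=
          add_le_add_right (mul_le_of_le_one_right' (M.survival_le_one A _ x)) _
      _ ≤ F x := hdrift x hx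

lemma tsum_P_mul_add_le_of_gen_le {f : M.X → ℝ} (hf : M.InDomPos f) {ε : ℝ} (hε : 0 ≤ ε)
    {x : M.X} (hx : M.gen f x ≤ -ε) :
    ∑' y, ENNReal.ofReal (M.P x y) * ENNReal.ofReal (f y)
      + ENNReal.ofReal ε * ENNReal.ofReal (M.γ x)⁻¹ ≤ ENNReal.ofReal (f x) := by
  have hγ := M.γ_pos x
  have hPf : ∑' y, M.P x y * f y = (∑' y, if y = x then 0 else M.Γ x y * f y) / M.γ x := by
    simp only [M.P_mul_eq_div x f, tsum_div_const]
  have hsum : Summable fun y => M.P x y * f y := by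
    simpa only [← M.P_mul_eq_div x f] using (hf.2 x).div_const (M.γ x)
  have hnonneg : ∀ y, 0 ≤ M.P x y * f y := fun y => mul_nonneg (M.P_nonneg x y) (hf.1 y)
  have hreal : ∑' y, M.P x y * f y + ε * (M.γ x)⁻¹ ≤ f x := by
    rw [hPf, ← div_eq_mul_inv, ← add_div, div_le_iff₀ hγ]
    unfold gen at hx
    linarith
  calc ∑' y, ENNReal.ofReal (M.P x y) * ENNReal.ofReal (f y)
        + ENNReal.ofReal ε * ENNReal.ofReal (M.γ x)⁻¹
      = ENNReal.ofReal (∑' y, M.P x y * f y + ε * (M.γ x)⁻¹) := by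
        rw [ENNReal.ofReal_add (tsum_nonneg hnonneg) (by positivity), ENNReal.ofReal_mul hε,
          ENNReal.ofReal_tsum_of_nonneg hnonneg hsum]
        simp only [ENNReal.ofReal_mul (M.P_nonneg x _)]
    _ ≤ ENNReal.ofReal (f x) := ENNReal.ofReal_le_ofReal hreal

def survivalEvent (n : ℕ) (x : M.X) : Set M.Ω :=
  {ω | M.jump 0 ω = x ∧ ∀ k < n, M.jump (k + 1) ω ∉ A}

lemma measurableSet_survivalEvent (n : ℕ) (x : M.X) : MeasurableSet (M.survivalEvent A n x) := by
  simp only [survivalEvent, ofPred_and, ofPred_forall]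
  exact (M.jump_meas 0 x).inter
    (.iInter fun k => .iInter fun _ => (M.measurableSet_jump_mem (k + 1) A).compl)

lemma survivalEvent_antitone (x : M.X) : Antitone (M.survivalEvent A · x) :=
  fun _ _ hmn _ ⟨h0, hk⟩ => ⟨h0, fun k hk' => hk k (hk'.trans_le hmn)⟩

lemma survivalEvent_eq_iUnion (n : ℕ) (x : M.X) :
    M.survivalEvent A n x
      = ⋃ v : {v : Fin n → M.X | ∀ k, v k ∉ A}, M.cylinder n (M.pathFrom x v.1) := by
  ext ω
  constructor
  · rintro ⟨h0, hk⟩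
    refine mem_iUnion.mpr ⟨⟨fun k => M.jump (k + 1) ω, fun k => hk k k.2⟩, fun j hj => ?_⟩
    cases j with
    | zero => exact h0
    | succ i => simp [pathFrom, Nat.lt_of_succ_le hj]
  · rintro ⟨-, ⟨v, rfl⟩, hv⟩
    refine ⟨hv 0 n.zero_le, fun k hk => ?_⟩
    rw [hv (k + 1) hk]
    simpa [pathFrom, hk] using v.2 ⟨k, hk⟩

lemma pairwise_disjoint_cylinder_pathFrom (n : ℕ) (x : M.X) :
    Pairwise (Function.onFun Disjoint fun v : Fin n → M.X => M.cylinder n (M.pathFrom x v)) := by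
  intro v v' hne
  obtain ⟨k, hk⟩ := Function.ne_iff.mp hne
  refine disjoint_left.mpr fun ω h h' => hk ?_
  have e := h (k + 1) k.2
  have e' := h' (k + 1) k.2
  simp only [pathFrom, k.2, dite_true] at e e'
  exact e.symm.trans e'

lemma setLIntegral_survivalEvent (n : ℕ) (x : M.X) (g : M.Ω → ℝ≥0∞) :
    ∫⁻ ω in M.survivalEvent A n x, g ω ∂M.μ x
      = ∑' v : Fin n → M.X,
          if ∀ k, v k ∉ A then ∫⁻ ω in M.cylinder n (M.pathFrom x v), g ω ∂M.μ x else 0 := by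
  rw [M.survivalEvent_eq_iUnion, lintegral_iUnion (fun _ => M.measurableSet_cylinder _ _)
      ((M.pairwise_disjoint_cylinder_pathFrom n x).comp_of_injective Subtype.val_injective)]
  refine (tsum_subtype {v : Fin n → M.X | ∀ k, v k ∉ A}
    fun v => ∫⁻ ω in M.cylinder n (M.pathFrom x v), g ω ∂M.μ x).trans (tsum_congr fun v => ?_)
  simp only [indicator_apply, mem_ofPred_eq]

lemma measure_cylinder_pathFrom {n : ℕ} (x : M.X) (v : Fin n → M.X) :
    M.μ x (M.cylinder n (M.pathFrom x v)) = M.pathWeight x v :=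
  M.measure_cylinder rfl

lemma measure_survivalEvent (n : ℕ) (x : M.X) :
    M.μ x (M.survivalEvent A n x) = M.survival A n x := by
  rw [← setLIntegral_one, M.setLIntegral_survivalEvent, M.survival_eq_tsum]
  simp only [setLIntegral_one, measure_cylinder_pathFrom]

lemma setLIntegral_survivalEvent_J (n : ℕ) (x : M.X) :
    ∫⁻ ω in M.survivalEvent A n x, ENNReal.ofReal (M.J n ω) ∂M.μ x = M.survivalTime A n x := by
  rw [M.setLIntegral_survivalEvent, M.survivalTime_eq_tsum]
  refine tsum_congr fun v => ?_
  split_ifs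
  · simp only [J, ENNReal.ofReal_sum_of_nonneg fun k _ => (M.hold_pos k _).le]
    rw [lintegral_finsetSum _ fun k _ => (M.hold_meas k).ennreal_ofReal, meanJumpTime,
      Finset.mul_sum]
    refine Finset.sum_congr rfl fun k hk => ?_
    rw [M.setLIntegral_cylinder_hold (p := M.pathFrom x v) (x := x) rfl (Finset.mem_range.mp hk),
      measure_cylinder_pathFrom, mul_comm]
  · rfl

lemma ae_jump_zero (x : M.X) : ∀ᵐ ω ∂M.μ x, M.jump 0 ω = x :=
  ae_iff.mpr ((prob_compl_eq_zero_iff (M.jump_meas 0 x)).mpr (M.start x))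

lemma avoiding_ae_eq_iInter_survivalEvent {x : M.X} (hx : x ∉ A) :
    {ω | ∀ n, M.jump n ω ∉ A} =ᵐ[M.μ x] ⋂ n, M.survivalEvent A n x := by
  filter_upwards [M.ae_jump_zero x] with ω h0
  refine propext ⟨fun h => mem_iInter.mpr fun n => ⟨h0, fun k _ => h (k + 1)⟩, fun h => ?_⟩
  rintro (_ | k)
  · exact h0 ▸ hx
  · exact (mem_iInter.mp h (k + 1)).2 k k.lt_succ_self

lemma measure_avoiding {x : M.X} (hx : x ∉ A) :
    M.μ x {ω | ∀ n, M.jump n ω ∉ A} = ⨅ n, M.survival A n x := by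
  rw [measure_congr (M.avoiding_ae_eq_iInter_survivalEvent A hx),
    (M.survivalEvent_antitone A x).measure_iInter
      (fun n => (M.measurableSet_survivalEvent A n x).nullMeasurableSet) ⟨0, measure_ne_top _ _⟩]
  simp only [measure_survivalEvent]

lemma setLIntegral_avoiding_zeta_le {x : M.X} (hx : x ∉ A) :
    ∫⁻ ω in {ω | ∀ n, M.jump n ω ∉ A}, M.zeta ω ∂M.μ x ≤ ⨆ n, M.survivalTime A n x := by
  rw [setLIntegral_congr (M.avoiding_ae_eq_iInter_survivalEvent A hx)]
  unfold CTMC.zeta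
  have hJ n : Measurable (M.J n) := Finset.measurable_sum _ fun k _ => M.hold_meas k
  have hmono : Monotone fun n ω => ENNReal.ofReal (M.J n ω) :=
    fun m n hmn ω => ENNReal.ofReal_le_ofReal ((M.J_strictMono ω).monotone hmn)
  rw [lintegral_iSup (fun n => (hJ n).ennreal_ofReal) hmono]
  refine iSup_mono fun n => ?_
  rw [← M.setLIntegral_survivalEvent_J]
  exact lintegral_mono_set (iInter_subset _ n)

theorem measure_avoiding_pos_and_setLIntegral_zeta_lt_top {F : M.X → ℝ≥0∞} {ε b : ℝ≥0∞}
    (hε : ε ≠ 0) (hFA : ∀ a ∈ A, b ≤ F a)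
    (hdrift : ∀ x ∉ A, ∑' y, ENNReal.ofReal (M.P x y) * F y + ε * ENNReal.ofReal (M.γ x)⁻¹ ≤ F x)
    {x : M.X} (hx : x ∉ A) (hFx : F x < b) :
    0 < M.μ x {ω | ∀ n, M.jump n ω ∉ A}
      ∧ ∫⁻ ω in {ω | ∀ n, M.jump n ω ∉ A}, M.zeta ω ∂M.μ x < ⊤ := by
  have hFx_top : F x ≠ ⊤ := hFx.ne_top
  have hb : b ≠ 0 := (pos_of_gt hFx).ne'
  have key n := M.mul_survivalTime_add_mul_hitting_le A hFA hdrift n x hx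
  have hhit n : M.hitting A n x ≤ F x / b := by
    rw [ENNReal.le_div_iff_mul_le (.inl hb) (.inr hFx_top), mul_comm]
    exact le_add_self.trans (key n)
  have htime n : M.survivalTime A n x ≤ F x / ε := by
    rw [ENNReal.le_div_iff_mul_le (.inl hε) (.inr hFx_top), mul_comm]
    exact le_self_add.trans (key n)
  have hsurv n : 1 - F x / b ≤ M.survival A n x := by
    rw [tsub_le_iff_right, ← M.survival_add_hitting A n x]
    exact add_le_add_right (hhit n) _
  refine ⟨?_, ?_⟩
  · rw [M.measure_avoiding A hx]
    refine (tsub_pos_of_lt ?_).trans_le (le_iInf hsurv)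
    rwa [ENNReal.div_lt_iff (.inl hb) (.inr hFx_top), one_mul]
  · exact (M.setLIntegral_avoiding_zeta_le A hx).trans_lt
      ((iSup_le htime).trans_lt (ENNReal.div_lt_top hFx_top hε))

end CTMC

open CTMC in
theorem statement5_general (M : CTMC) (A : Set M.X)
    (f : M.X → ℝ) (hf : M.InDomPos f)
    (ε : ℝ) (hε : 0 < ε)
    (hdrift : ∀ x, x ∉ A → M.gen f x ≤ -ε) :
    ∀ x, x ∉ A → f x < sInf (f '' A) →
      0 < M.μ x {ω | M.tau A ω = ⊤} ∧
      (∫⁻ ω in {ω | M.tau A ω = ⊤}, M.zeta ω ∂ M.μ x) / M.μ x {ω | M.tau A ω = ⊤} < ⊤ := by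
  intro x hx hfx
  have hfA : ∀ a ∈ A, ENNReal.ofReal (sInf (f '' A)) ≤ ENNReal.ofReal (f a) := fun a ha =>
    ENNReal.ofReal_le_ofReal
      (csInf_le ⟨0, forall_mem_image.mpr fun y _ => hf.1 y⟩ (mem_image_of_mem f ha))
  have hτ : {ω | M.tau A ω = ⊤} = {ω | ∀ n, M.jump n ω ∉ A} := ext fun ω => M.tau_eq_top_iff A ω
  obtain ⟨hpos, hfin⟩ := M.measure_avoiding_pos_and_setLIntegral_zeta_lt_top A
    (ENNReal.ofReal_pos.mpr hε).ne' hfA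
    (fun y hy => M.tsum_P_mul_add_le_of_gen_le hf hε.le (hdrift y hy)) hx
    ((ENNReal.ofReal_lt_ofReal_iff ((hf.1 x).trans_lt hfx)).mpr hfx)
  rw [hτ]
  exact ⟨hpos, ENNReal.div_lt_top hfin.ne hpos.ne'⟩

open CTMC in
/-- Theorem (conditional explosion): if `f ∈ Dom_+(Γ)` satisfies `Γ f ≤ -ε`
off `A` and `f(x₀) < inf_A f` for some `x₀ ∉ A`, then for every `x ∉ A` with
`f(x) < inf_A f` the event `{τ_A = ∞}` has positive probability and the
conditional expectation `E_x(ζ | τ_A = ∞)` is finite. -/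
theorem statement5 (M : CTMC) (A : Set M.X) (hA : A.Nonempty) (hAproper : A ≠ Set.univ)
    (f : M.X → ℝ) (hf : M.InDomPos f)
    (hx0 : ∃ x₀, x₀ ∉ A ∧ f x₀ < sInf (f '' A))
    (ε : ℝ) (hε : 0 < ε)
    (hdrift : ∀ x, x ∉ A → M.gen f x ≤ -ε) :
    ∀ x, x ∉ A → f x < sInf (f '' A) →
      0 < M.μ x {ω | M.tau A ω = ⊤} ∧
      (∫⁻ ω in {ω | M.tau A ω = ⊤}, M.zeta ω ∂ M.μ x) / M.μ x {ω | M.tau A ω = ⊤} < ⊤ :=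
  statement5_general M A f hf ε hε hdrift
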